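/- arXiv:2511.07030 — 2 statements merged into one kernel-verified Lean document; each statement's English description precedes it below -/
import Mathlib

section
/- Let ψ, (ψ_q)_{q≥q₀} : ℝ^m → ℝ be bounded functions with a common modulus of continuity ω, with ψ_q → ψ uniformly on the ball B_{1+‖g‖₀}(x). Assume g(·,u,y) satisfies |g(x,u,y) − g(x',u,y)| ≤ g₁·|x−x'| and |g| ≤ ‖g‖₀ for all u, y. Then for any r < r', there exist q₀ large and δ > 0 such that U(ψ_q, x', r) ⊆ U(ψ_{q'}, x, r') for all x' ∈ B_δ(x) and all q, q' ∈ [q₀, ∞] (where ψ_∞ = ψ). -/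
/-!
If `x'` is close to `x`, the Lipschitz bound on `g` keeps the post-jump states `x + g x u y` and
`x' + g x' u y` uniformly close, and both stay in the ball `B_{1+g₀}(x)` on which every `ψ_q`,
`q ≥ q₀`, is `ε`-close to `ψ`. For two such functions `φ, φ'` the common modulus `ω` then gives
`φ' (x + g x u y) ≤ φ' (x' + g x' u y) + ε ≤ φ (x' + g x' u y) + 3ε`, and `3ε < r' - r` turns
the constraint `φ ≤ r` at `x'` into `φ' ≤ r'` at `x`, for every `u` and every `y`.
-/

open MeasureTheory Filter

/-- The state-constrained control set. -/
def Uset {m : ℕ} {U : Type*} (g : EuclideanSpace ℝ (Fin m) → U → ℝ → EuclideanSpace ℝ (Fin m))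
    (μ : MeasureTheory.Measure ℝ) (φ : EuclideanSpace ℝ (Fin m) → ℝ)
    (z : EuclideanSpace ℝ (Fin m)) (s : ℝ) : Set U :=
  {u : U | ∀ᵐ y ∂μ, φ (z + g z u y) ≤ s}

section NormedGroup

variable {E : Type*} [SeminormedAddCommGroup E]

lemma norm_add_sub_add_le_of_lipschitz {f : E → E} {L : ℝ}
    (hf : ∀ z z', ‖f z - f z'‖ ≤ L * ‖z - z'‖) (z z' : E) :
    ‖(z + f z) - (z' + f z')‖ ≤ (1 + |L|) * ‖z - z'‖ :=
  calc ‖(z + f z) - (z' + f z')‖ = ‖(z - z') + (f z - f z')‖ := by rw [add_sub_add_comm]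
    _ ≤ ‖z - z'‖ + L * ‖z - z'‖ := (norm_add_le _ _).trans (add_le_add le_rfl (hf z z'))
    _ ≤ (1 + |L|) * ‖z - z'‖ := by nlinarith [le_abs_self L, norm_nonneg (z - z')]

lemma add_mem_closedBall_of_norm_le {x z v : E} {a b : ℝ} (hz : dist z x ≤ a) (hv : ‖v‖ ≤ b) :
    z + v ∈ Metric.closedBall x (a + b) :=
  calc dist (z + v) x ≤ dist (z + v) z + dist z x := dist_triangle _ _ _
    _ ≤ a + b := by rw [dist_self_add_left]; linarith

end NormedGroup

section Uset

variable {m : ℕ} {U : Type*} {g : EuclideanSpace ℝ (Fin m) → U → ℝ → EuclideanSpace ℝ (Fin m)}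
  {μ : Measure ℝ}

lemma Uset_subset_Uset_of_le_add {φ φ' : EuclideanSpace ℝ (Fin m) → ℝ}
    {x x' : EuclideanSpace ℝ (Fin m)} {r r' c : ℝ}
    (h : ∀ u y, φ' (x + g x u y) ≤ φ (x' + g x' u y) + c) (hc : r + c ≤ r') :
    Uset g μ φ x' r ⊆ Uset g μ φ' x r' := fun u (hu : ∀ᵐ y ∂μ, φ (x' + g x' u y) ≤ r) =>
  hu.mono fun y hy => by linarith [h u y]

lemma Uset_subset_Uset_of_uniformly_close {ψ φ φ' : EuclideanSpace ℝ (Fin m) → ℝ} {ω : ℝ → ℝ}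
    {s : Set (EuclideanSpace ℝ (Fin m))} {x x' : EuclideanSpace ℝ (Fin m)} {ε r r' : ℝ}
    (hmem : ∀ u y, x' + g x' u y ∈ s)
    (hnear : ∀ u y, ω ‖(x + g x u y) - (x' + g x' u y)‖ ≤ ε)
    (hmod : ∀ z z', |φ' z - φ' z'| ≤ ω ‖z - z'‖)
    (hφ : ∀ z ∈ s, |ψ z - φ z| ≤ ε) (hφ' : ∀ z ∈ s, |ψ z - φ' z| ≤ ε)
    (hr : r + 3 * ε ≤ r') :
    Uset g μ φ x' r ⊆ Uset g μ φ' x r' := by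
  refine Uset_subset_Uset_of_le_add (fun u y => ?_) hr
  obtain ⟨-, hmod_le⟩ := abs_le.mp ((hmod _ _).trans (hnear u y))
  obtain ⟨-, hφ_le⟩ := abs_le.mp (hφ _ (hmem u y))
  obtain ⟨hφ'_ge, -⟩ := abs_le.mp (hφ' _ (hmem u y))
  linarith

end Uset

/-- The index set `[q₀, ∞]` is covered by giving the inclusions for all finite
`q, q' ≥ q₀` as well as for the limit function `ψ = ψ_∞` in either slot. -/
theorem stmt_13_general {m : ℕ} {U : Type*}
    (ψ : EuclideanSpace ℝ (Fin m) → ℝ) (ψq : ℝ → EuclideanSpace ℝ (Fin m) → ℝ)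
    (ω : ℝ → ℝ)
    (hω0 : ∀ ε > (0 : ℝ), ∃ δ > (0 : ℝ), ∀ t, 0 ≤ t → t ≤ δ → ω t ≤ ε)
    (hmod : ∀ z z', |ψ z - ψ z'| ≤ ω ‖z - z'‖)
    (hmodq : ∀ q z z', |ψq q z - ψq q z'| ≤ ω ‖z - z'‖)
    (g : EuclideanSpace ℝ (Fin m) → U → ℝ → EuclideanSpace ℝ (Fin m))
    (g₀ g₁ : ℝ)
    (hg₀ : ∀ z u y, ‖g z u y‖ ≤ g₀)
    (hg₁ : ∀ z z' u y, ‖g z u y - g z' u y‖ ≤ g₁ * ‖z - z'‖)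
    (μ : Measure ℝ)
    (x : EuclideanSpace ℝ (Fin m))
    (hconv : TendstoUniformlyOn ψq ψ atTop (Metric.closedBall x (1 + g₀)))
    (r r' : ℝ) (hrr' : r < r') :
    ∃ q₀ : ℝ, ∃ δ > (0 : ℝ), ∀ x' ∈ Metric.closedBall x δ,
      (∀ q q', q₀ ≤ q → q₀ ≤ q' →
        Uset g μ (ψq q) x' r ⊆ Uset g μ (ψq q') x r') ∧
      (∀ q, q₀ ≤ q → Uset g μ (ψq q) x' r ⊆ Uset g μ ψ x r') ∧
      (∀ q', q₀ ≤ q' → Uset g μ ψ x' r ⊆ Uset g μ (ψq q') x r') ∧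
      Uset g μ ψ x' r ⊆ Uset g μ ψ x r' := by
  set ε := (r' - r) / 4 with hε_def
  have hε : 0 < ε := by linarith
  have hr : r + 3 * ε ≤ r' := by linarith
  obtain ⟨δ₀, hδ₀, hω⟩ := hω0 ε hε
  obtain ⟨q₀, hq₀⟩ := (Metric.tendstoUniformlyOn_iff.mp hconv ε hε).exists_forall_of_atTop
  have hψq : ∀ q, q₀ ≤ q → ∀ z ∈ Metric.closedBall x (1 + g₀), |ψ z - ψq q z| ≤ ε :=
    fun q hq z hz => (hq₀ q hq z hz).le
  have hψ : ∀ z ∈ Metric.closedBall x (1 + g₀), |ψ z - ψ z| ≤ ε := by simp [hε.le]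
  refine ⟨q₀, min 1 (δ₀ / (1 + |g₁|)), by positivity, fun x' hx' => ?_⟩
  rw [Metric.mem_closedBall, le_min_iff, le_div_iff₀ (by positivity), dist_eq_norm,
    ← norm_neg, neg_sub] at hx'
  have hmem : ∀ u y, x' + g x' u y ∈ Metric.closedBall x (1 + g₀) := fun u y =>
    add_mem_closedBall_of_norm_le (by rw [dist_eq_norm]; linarith [norm_sub_rev x x']) (hg₀ x' u y)
  have hnear : ∀ u y, ω ‖(x + g x u y) - (x' + g x' u y)‖ ≤ ε := fun u y =>
    hω _ (norm_nonneg _) <| (norm_add_sub_add_le_of_lipschitz (fun z z' => hg₁ z z' u y) x x').trans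
      (by linarith)
  exact ⟨fun q q' hq hq' => Uset_subset_Uset_of_uniformly_close hmem hnear (hmodq q') (hψq q hq)
      (hψq q' hq') hr,
    fun q hq => Uset_subset_Uset_of_uniformly_close hmem hnear hmod (hψq q hq) hψ hr,
    fun q' hq' => Uset_subset_Uset_of_uniformly_close hmem hnear (hmodq q') hψ (hψq q' hq') hr,
    Uset_subset_Uset_of_uniformly_close hmem hnear hmod hψ hψ hr⟩

/-- Proposition 6, assertion 2: stability of the state-constrained control sets.
The index set `[q₀, ∞]` is covered by giving the inclusions for all finite
`q, q' ≥ q₀` as well as for the limit function `ψ = ψ_∞` in either slot. -/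
theorem stmt_13 {m : ℕ} {U : Type*} [MetricSpace U] [CompactSpace U]
    (ψ : EuclideanSpace ℝ (Fin m) → ℝ) (ψq : ℝ → EuclideanSpace ℝ (Fin m) → ℝ)
    (Mb : ℝ) (hbdd : ∀ z, |ψ z| ≤ Mb) (hbddq : ∀ q z, |ψq q z| ≤ Mb)
    (ω : ℝ → ℝ) (hωmono : Monotone ω) (hωnonneg : ∀ t, 0 ≤ ω t)
    (hω0 : ∀ ε > (0 : ℝ), ∃ δ > (0 : ℝ), ∀ t, 0 ≤ t → t ≤ δ → ω t ≤ ε)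
    (hmod : ∀ z z', |ψ z - ψ z'| ≤ ω ‖z - z'‖)
    (hmodq : ∀ q z z', |ψq q z - ψq q z'| ≤ ω ‖z - z'‖)
    (g : EuclideanSpace ℝ (Fin m) → U → ℝ → EuclideanSpace ℝ (Fin m))
    (g₀ g₁ : ℝ)
    (hg₀ : ∀ z u y, ‖g z u y‖ ≤ g₀)
    (hg₁ : ∀ z z' u y, ‖g z u y - g z' u y‖ ≤ g₁ * ‖z - z'‖)
    (μ : Measure ℝ) [IsProbabilityMeasure μ]
    (x : EuclideanSpace ℝ (Fin m))
    (hconv : TendstoUniformlyOn ψq ψ atTop (Metric.closedBall x (1 + g₀)))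
    (r r' : ℝ) (hrr' : r < r') :
    ∃ q₀ : ℝ, ∃ δ > (0 : ℝ), ∀ x' ∈ Metric.closedBall x δ,
      (∀ q q', q₀ ≤ q → q₀ ≤ q' →
        Uset g μ (ψq q) x' r ⊆ Uset g μ (ψq q') x r') ∧
      (∀ q, q₀ ≤ q → Uset g μ (ψq q) x' r ⊆ Uset g μ ψ x r') ∧
      (∀ q', q₀ ≤ q' → Uset g μ ψ x' r ⊆ Uset g μ (ψq q') x r') ∧
      Uset g μ ψ x' r ⊆ Uset g μ ψ x r' :=
  stmt_13_general ψ ψq ω hω0 hmod hmodq g g₀ g₁ hg₀ hg₁ μ x hconv r r' hrr'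
end

section
/- Let c₀(i, p) = λ·E·u·Σ_{j=1}^n ( (Σ_{k=1}^n i_k)/(n·p_j) − i_j )⁺ with λ, E, u > 0, i ∈ [0,1]^n, p ∈ [1,∞)^n. Then c₀ cannot be written as Σ_{j=1}^n c_{0,j}(i_j, p_j) with each c_{0,j} nonnegative, unless c₀ ≡ 0; in fact, if such a decomposition with nonnegative c_{0,j} exists on [0,1]^n × [1,∞)^n, then all c_{0,j} = 0. -/
open Finset

theorem mul_div_mul_le_self_of_one_le (a : ℝ) {x y : ℝ} (hx : 0 ≤ x) (hy : 1 ≤ y) :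
    a * x / (a * y) ≤ x := by
  rcases eq_or_ne a 0 with rfl | ha
  · simpa using hx
  · rw [mul_div_mul_left x y ha]
    exact div_le_self hx hy

theorem sum_max_const_div_sub_eq_zero (n : ℕ) {x y : ℝ} (hx : 0 ≤ x) (hy : 1 ≤ y) :
    ∑ _j : Fin n, max ((∑ _k : Fin n, x) / (n * y) - x) 0 = 0 := by
  have hterm : (∑ _k : Fin n, x) / (n * y) ≤ x := by
    rw [sum_const, card_univ, Fintype.card_fin, nsmul_eq_mul]
    exact mul_div_mul_le_self_of_one_le _ hx hy
  rw [max_eq_right (sub_nonpos.mpr hterm), sum_const_zero]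

theorem stmt_16_general (n : ℕ) (l E u : ℝ)
    (c : Fin n → ℝ → ℝ → ℝ)
    (hc_nonneg : ∀ j x y, x ∈ Set.Icc (0 : ℝ) 1 → 1 ≤ y → 0 ≤ c j x y)
    (hdecomp : ∀ (i p : Fin n → ℝ), (∀ j, i j ∈ Set.Icc (0 : ℝ) 1) → (∀ j, 1 ≤ p j) →
      l * E * u * ∑ j, max ((∑ k, i k) / (n * p j) - i j) 0 = ∑ j, c j (i j) (p j)) :
    ∀ j x y, x ∈ Set.Icc (0 : ℝ) 1 → 1 ≤ y → c j x y = 0 := by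
  intro j x y hx hy
  have hsum : ∑ k, c k x y = 0 := by
    rw [← hdecomp (fun _ => x) (fun _ => y) (fun _ => hx) (fun _ => hy),
      sum_max_const_div_sub_eq_zero n hx.1 hy, mul_zero]
  exact (sum_eq_zero_iff_of_nonneg fun k _ => hc_nonneg k x y hx hy).mp hsum j (mem_univ j)

theorem stmt_16 (n : ℕ) (hn : 1 ≤ n) (l E u : ℝ) (hl : 0 < l) (hE : 0 < E) (hu : 0 < u)
    (c : Fin n → ℝ → ℝ → ℝ)
    (hc_nonneg : ∀ j x y, x ∈ Set.Icc (0 : ℝ) 1 → 1 ≤ y → 0 ≤ c j x y)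
    (hdecomp : ∀ (i p : Fin n → ℝ), (∀ j, i j ∈ Set.Icc (0 : ℝ) 1) → (∀ j, 1 ≤ p j) →
      l * E * u * ∑ j, max ((∑ k, i k) / (n * p j) - i j) 0 = ∑ j, c j (i j) (p j)) :
    ∀ j x y, x ∈ Set.Icc (0 : ℝ) 1 → 1 ≤ y → c j x y = 0 :=
  stmt_16_general n l E u c hc_nonneg hdecomp
end
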